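/- Let S be a commutative ring, F a formal group law over S, n ≥ 2, and 1 ≤ i ≤ n−1. Then the elements ξ, ξ' ∈ A = R ⊗_{R^{s_i}} R satisfy μ(ξ) = x_i −_F x_{i+1}, μ_s(ξ) = 0, μ(ξ') = 0, and μ_s(ξ') = x_{i+1} −_F x_i; moreover ξ is the unique element of A with μ(ξ) = x_i −_F x_{i+1} and μ_s(ξ) = 0, and ξ' is the unique element of A with μ(ξ') = 0 and μ_s(ξ') = x_{i+1} −_F x_i. -/

import Mathlib

/- Common setup: substitution of multivariate power series, formal group laws,
formal inverses, and the variable–swapping operation. -/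

open MvPowerSeries Finsupp

noncomputable section

variable {S : Type*} [CommRing S]

/-- Substitution of a family of multivariate power series (each intended to have zero
constant coefficient) into a power series in `k` variables.  When every `a j` has zero
constant coefficient, the coefficient of a monomial `m` of the substituted series only
receives contributions from exponents `d` with `d j ≤ deg m`, so the finite sum below
computes the genuine substitution. -/
noncomputable def msubst {k n : ℕ} (a : Fin k → MvPowerSeries (Fin n) S)
    (F : MvPowerSeries (Fin k) S) : MvPowerSeries (Fin n) S :=
  fun m =>
    ∑ d ∈ Finset.Iic (equivFunOnFinite.symm fun _ : Fin k => m.sum fun _ e => e),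
      MvPowerSeries.coeff (R := S) d F * MvPowerSeries.coeff (R := S) m (∏ j, a j ^ d j)

/-- `F ∈ S[[x,y]]` is a (one-dimensional, commutative) formal group law over `S`:
zero constant coefficient, commutativity `F(x,y) = F(y,x)`, unitality `F(x,0) = x`,
and associativity `F(F(x,y),z) = F(x,F(y,z))`. -/
def IsFormalGroupLaw (F : MvPowerSeries (Fin 2) S) : Prop :=
  MvPowerSeries.constantCoeff (σ := Fin 2) (R := S) F = 0 ∧
  msubst ![(X 1 : MvPowerSeries (Fin 2) S), X 0] F = F ∧
  msubst ![(X 0 : MvPowerSeries (Fin 2) S), 0] F = X 0 ∧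
  msubst ![msubst ![(X 0 : MvPowerSeries (Fin 3) S), X 1] F, X 2] F
    = msubst ![(X 0 : MvPowerSeries (Fin 3) S), msubst ![(X 1 : MvPowerSeries (Fin 3) S), X 2] F] F

/-- `ι ∈ S[[x]]` is the formal inverse of `F`: it has zero constant coefficient
and `F(x, ι(x)) = 0`. -/
def IsFormalInverse (F : MvPowerSeries (Fin 2) S) (ι : MvPowerSeries (Fin 1) S) : Prop :=
  MvPowerSeries.constantCoeff (σ := Fin 1) (R := S) ι = 0 ∧
  msubst ![(X 0 : MvPowerSeries (Fin 1) S), ι] F = 0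

/-- `ι(b)`, the substitution of `b` into the formal inverse `ι`. -/
noncomputable def fneg (ι : MvPowerSeries (Fin 1) S) {n : ℕ}
    (b : MvPowerSeries (Fin n) S) : MvPowerSeries (Fin n) S :=
  msubst ![b] ι

/-- `a −_F b := F(a, ι(b))`. -/
noncomputable def fsub (F : MvPowerSeries (Fin 2) S) (ι : MvPowerSeries (Fin 1) S) {n : ℕ}
    (a b : MvPowerSeries (Fin n) S) : MvPowerSeries (Fin n) S :=
  msubst ![a, fneg ι b] F

/-- Substitution `g(a,b)` of two power series into a two-variable power series `g`. -/
noncomputable def gsub (g : MvPowerSeries (Fin 2) S) {n : ℕ}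
    (a b : MvPowerSeries (Fin n) S) : MvPowerSeries (Fin n) S :=
  msubst ![a, b] g

/-- The map on multivariate power series interchanging the variables `x_i` and `x_j`
(the renaming along the transposition `(i,j)`). -/
def swapVars {n : ℕ} (i j : Fin n) (f : MvPowerSeries (Fin n) S) :
    MvPowerSeries (Fin n) S :=
  fun m => f (equivMapDomain (Equiv.swap i j) m)

theorem swapVars_coeff {n : ℕ} (i j : Fin n) (f : MvPowerSeries (Fin n) S) (m : Fin n →₀ ℕ) :
    MvPowerSeries.coeff (R := S) m (swapVars i j f)
      = MvPowerSeries.coeff (R := S) (equivMapDomain (Equiv.swap i j) m) f := rfl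

theorem equivMapDomain_swap_invol {n : ℕ} (i j : Fin n) (m : Fin n →₀ ℕ) :
    equivMapDomain (Equiv.swap i j) (equivMapDomain (Equiv.swap i j) m) = m := by
  rw [← equivMapDomain_trans, Equiv.swap_swap, equivMapDomain_refl]

theorem equivMapDomain_add' {n : ℕ} (e : Fin n ≃ Fin n) (a b : Fin n →₀ ℕ) :
    equivMapDomain e (a + b) = equivMapDomain e a + equivMapDomain e b := by
  ext x; simp [equivMapDomain_apply]

theorem swapVars_add {n : ℕ} (i j : Fin n) (f h : MvPowerSeries (Fin n) S) :
    swapVars i j (f + h) = swapVars i j f + swapVars i j h := rfl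

theorem swapVars_mul {n : ℕ} (i j : Fin n) (f h : MvPowerSeries (Fin n) S) :
    swapVars i j (f * h) = swapVars i j f * swapVars i j h := by
  ext m
  rw [swapVars_coeff, MvPowerSeries.coeff_mul, MvPowerSeries.coeff_mul]
  refine Finset.sum_nbij'
    (fun p => (equivMapDomain (Equiv.swap i j) p.1, equivMapDomain (Equiv.swap i j) p.2))
    (fun p => (equivMapDomain (Equiv.swap i j) p.1, equivMapDomain (Equiv.swap i j) p.2))
    ?_ ?_ ?_ ?_ ?_
  · intro p hp
    simp only [Finset.HasAntidiagonal.mem_antidiagonal] at hp ⊢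
    rw [← equivMapDomain_add', hp, equivMapDomain_swap_invol]
  · intro p hp
    simp only [Finset.HasAntidiagonal.mem_antidiagonal] at hp ⊢
    rw [← equivMapDomain_add', hp]
  · intro p _; simp [equivMapDomain_swap_invol]
  · intro p _; simp [equivMapDomain_swap_invol]
  · intro p _
    rw [swapVars_coeff, swapVars_coeff, equivMapDomain_swap_invol, equivMapDomain_swap_invol]

theorem swapVars_C {n : ℕ} (i j : Fin n) (s : S) :
    swapVars i j (MvPowerSeries.C (σ := Fin n) (R := S) s) = MvPowerSeries.C (σ := Fin n) (R := S) s := by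
  ext m
  rw [swapVars_coeff, MvPowerSeries.coeff_C, MvPowerSeries.coeff_C]
  by_cases hm : m = 0
  · subst hm; rw [equivMapDomain_zero]
  · rw [if_neg, if_neg hm]
    intro hc
    apply hm
    have := congrArg (equivMapDomain (Equiv.swap i j)) hc
    rwa [equivMapDomain_swap_invol, equivMapDomain_zero] at this

theorem swapVars_one {n : ℕ} (i j : Fin n) :
    swapVars i j (1 : MvPowerSeries (Fin n) S) = 1 := by
  have := swapVars_C (S := S) i j 1
  rwa [map_one] at this

/-- The fixed subalgebra `R^{s_i}` of power series invariant under interchanging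
the variables `x_i` and `x_j`. -/
noncomputable def fixedSubalgebra (S : Type*) [CommRing S] {n : ℕ} (i j : Fin n) :
    Subalgebra S (MvPowerSeries (Fin n) S) where
  carrier := {f | swapVars i j f = f}
  mul_mem' := by
    intro a b ha hb
    simp only [Set.mem_setOf_eq] at *
    rw [swapVars_mul, ha, hb]
  add_mem' := by
    intro a b ha hb
    simp only [Set.mem_setOf_eq] at *
    rw [swapVars_add, ha, hb]
  algebraMap_mem' := fun s => swapVars_C i j s

/-- `s_i` as an algebra homomorphism over the fixed subalgebra. -/
noncomputable def swapAlgHom (S : Type*) [CommRing S] {n : ℕ} (i j : Fin n) :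
    MvPowerSeries (Fin n) S →ₐ[fixedSubalgebra S i j] MvPowerSeries (Fin n) S where
  toFun := swapVars i j
  map_one' := swapVars_one i j
  map_mul' := swapVars_mul i j
  map_zero' := rfl
  map_add' := swapVars_add i j
  commutes' := fun r => r.2

open TensorProduct in
/-- The elementary Bott–Samelson bimodule `A = R ⊗_{R^{s_i}} R`. -/
noncomputable abbrev BSB (S : Type*) [CommRing S] {n : ℕ} (i j : Fin n) : Type _ :=
  (MvPowerSeries (Fin n) S) ⊗[fixedSubalgebra S i j] (MvPowerSeries (Fin n) S)

/-- The multiplication map `μ : A → R`, `r1 ⊗ r2 ↦ r1·r2`. -/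
noncomputable def mulHom (S : Type*) [CommRing S] {n : ℕ} (i j : Fin n) :
    BSB S i j →ₐ[fixedSubalgebra S i j] MvPowerSeries (Fin n) S :=
  Algebra.TensorProduct.productMap (AlgHom.id _ _) (AlgHom.id _ _)

/-- The twisted multiplication map `μ_s : A → R`, `r1 ⊗ r2 ↦ r1·s_i(r2)`. -/
noncomputable def mulsHom (S : Type*) [CommRing S] {n : ℕ} (i j : Fin n) :
    BSB S i j →ₐ[fixedSubalgebra S i j] MvPowerSeries (Fin n) S :=
  Algebra.TensorProduct.productMap (AlgHom.id _ _) (swapAlgHom S i j)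

open TensorProduct in
/-- The element `ξ = x_i⊗1 −_F 1⊗x_{i+1} := (g(x_i,x_j)⁻¹ ⊗ 1)·(1 ⊗ x_i − x_j ⊗ 1)` of `A`. -/
noncomputable def xiElt (g : MvPowerSeries (Fin 2) S) {n : ℕ} (i j : Fin n) : BSB S i j :=
  (Ring.inverse (gsub g (X i) (X j)) ⊗ₜ[fixedSubalgebra S i j] (1 : MvPowerSeries (Fin n) S)) *
    ((1 : MvPowerSeries (Fin n) S) ⊗ₜ[fixedSubalgebra S i j] (X i)
      - (X j) ⊗ₜ[fixedSubalgebra S i j] (1 : MvPowerSeries (Fin n) S))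

open TensorProduct in
/-- The element `ξ' = x_{i+1}⊗1 −_F 1⊗x_{i+1} := (g(x_j,x_i)⁻¹ ⊗ 1)·(1 ⊗ x_i − x_i ⊗ 1)` of `A`. -/
noncomputable def xiElt' (g : MvPowerSeries (Fin 2) S) {n : ℕ} (i j : Fin n) : BSB S i j :=
  (Ring.inverse (gsub g (X j) (X i)) ⊗ₜ[fixedSubalgebra S i j] (1 : MvPowerSeries (Fin n) S)) *
    ((1 : MvPowerSeries (Fin n) S) ⊗ₜ[fixedSubalgebra S i j] (X i)
      - (X i) ⊗ₜ[fixedSubalgebra S i j] (1 : MvPowerSeries (Fin n) S))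


/-! Transporting the defining identity `x - y = (x -_F y) g(x, y)` along the renaming
`x ↦ x_i, y ↦ x_j` (which commutes with substitution) gives
`x_i - x_j = (x_i -_F x_j) g(x_i, x_j)`, and this computes `μ` and `μ_s` on `ξ` and `ξ'`.
For uniqueness, `R` is generated by `1, x_i` over `R^{s_i}`: `f = (f - q x_i) + q x_i` with `q` the
divided difference `(f - s_i f)/(x_i - x_j)`, which is symmetric because `x_i - x_j` is a
nonzerodivisor. So every element of `A` is `u ⊗ 1 + v ⊗ x_i`, and then `μ` and `μ_s` give
`u + v x_i` and `u + v x_j`, which determine `u` and `v`. -/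

section Substitution

variable {k m n : ℕ}

theorem coeff_msubst (a : Fin k → MvPowerSeries (Fin n) S) (F : MvPowerSeries (Fin k) S)
    (x : Fin n →₀ ℕ) :
    coeff x (msubst a F) =
      ∑ d ∈ Finset.Iic (equivFunOnFinite.symm fun _ : Fin k => x.sum fun _ e => e),
        coeff d F * coeff x (∏ t, a t ^ d t) := rfl

theorem msubst_X (F : MvPowerSeries (Fin k) S) : msubst X F = F := by
  classical
  have hmon (d : Fin k →₀ ℕ) : ∏ t, (X t : MvPowerSeries (Fin k) S) ^ d t = monomial d 1 := by
    rw [monomial_one_eq, Finsupp.prod_fintype _ _ fun _ => pow_zero _]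
  ext x
  rw [coeff_msubst, Finset.sum_eq_single x]
  · rw [hmon, coeff_monomial_same, mul_one]
  · intro d _ hd
    rw [hmon, coeff_monomial_ne (Ne.symm hd), mul_zero]
  · exact fun hx => absurd (Finset.mem_Iic.mpr fun t => le_degree t x) hx

theorem rename_msubst (f : Fin m → Fin n) (a : Fin k → MvPowerSeries (Fin m) S)
    (F : MvPowerSeries (Fin k) S) : rename f (msubst a F) = msubst (rename f ∘ a) F := by
  ext x
  have hdeg : ∀ y ∈ (Filter.TendstoCofinite.finite_preimage_singleton (mapDomain f) x).toFinset,
      (y.sum fun _ e => e) = x.sum fun _ e => e := by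
    intro y hy
    rw [Set.Finite.mem_toFinset, Set.mem_preimage, Set.mem_singleton_iff] at hy
    rw [← hy, sum_mapDomain_index (fun _ => rfl) (fun _ _ _ => rfl)]
  rw [coeff_rename, coeff_msubst,
    Finset.sum_congr rfl fun y hy => by rw [coeff_msubst, hdeg y hy], Finset.sum_comm]
  refine Finset.sum_congr rfl fun d _ => ?_
  rw [← Finset.mul_sum, ← coeff_rename, map_prod]
  simp only [map_pow, Function.comp_apply]

theorem rename_fneg (f : Fin m → Fin n) (ι : MvPowerSeries (Fin 1) S)
    (b : MvPowerSeries (Fin m) S) : rename f (fneg ι b) = fneg ι (rename f b) := by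
  rw [fneg, fneg, rename_msubst]
  congr 1
  ext t : 1
  fin_cases t
  rfl

theorem rename_fsub (f : Fin m → Fin n) (F : MvPowerSeries (Fin 2) S)
    (ι : MvPowerSeries (Fin 1) S) (a b : MvPowerSeries (Fin m) S) :
    rename f (fsub F ι a b) = fsub F ι (rename f a) (rename f b) := by
  rw [fsub, fsub, rename_msubst, ← rename_fneg]
  congr 1
  ext t : 1
  fin_cases t <;> rfl

theorem gsub_X (g : MvPowerSeries (Fin 2) S) (i j : Fin n) :
    gsub g (X i) (X j) = rename ![i, j] g := by
  conv_rhs => rw [← msubst_X g]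
  rw [gsub, rename_msubst]
  congr 1
  ext t : 1
  fin_cases t <;> simp [rename_X]

end Substitution

section Transport

variable {F g : MvPowerSeries (Fin 2) S} {ι : MvPowerSeries (Fin 1) S} {n : ℕ}

theorem X_sub_X_eq_fsub_mul_gsub
    (hg : (X 0 : MvPowerSeries (Fin 2) S) - X 1 = fsub F ι (X 0) (X 1) * g) (i j : Fin n) :
    (X i : MvPowerSeries (Fin n) S) - X j = fsub F ι (X i) (X j) * gsub g (X i) (X j) := by
  simpa [rename_fsub, gsub_X] using congrArg (rename ![i, j]) hg

theorem isUnit_gsub (hgu : IsUnit g) (i j : Fin n) : IsUnit (gsub g (X i) (X j)) :=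
  gsub_X g i j ▸ hgu.map (rename ![i, j])

theorem inverse_gsub_mul_X_sub_X
    (hg : (X 0 : MvPowerSeries (Fin 2) S) - X 1 = fsub F ι (X 0) (X 1) * g) (hgu : IsUnit g)
    (i j : Fin n) : Ring.inverse (gsub g (X i) (X j)) * (X i - X j) = fsub F ι (X i) (X j) := by
  rw [X_sub_X_eq_fsub_mul_gsub hg, mul_comm,
    Ring.mul_inverse_cancel_right _ _ (isUnit_gsub hgu i j)]

end Transport

section DividedDifference

variable {n : ℕ} {i j : Fin n}

theorem coeff_X_mul (k : Fin n) (f : MvPowerSeries (Fin n) S) (m : Fin n →₀ ℕ) :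
    coeff m (X k * f) = if single k 1 ≤ m then coeff (m - single k 1) f else 0 := by
  rw [X_def, coeff_monomial_mul, one_mul]

theorem swapVars_X (i j k : Fin n) :
    swapVars i j (X k : MvPowerSeries (Fin n) S) = X (Equiv.swap i j k) := by
  classical
  ext m
  rw [swapVars_coeff, coeff_X, coeff_X]
  congr 1
  rw [← equivCongrLeft_apply, ← Equiv.eq_symm_apply, equivCongrLeft_symm,
    equivCongrLeft_apply, Equiv.symm_swap, equivMapDomain_single]

theorem swapVars_sub (f h : MvPowerSeries (Fin n) S) :
    swapVars i j (f - h) = swapVars i j f - swapVars i j h := rfl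

theorem swapVars_swapVars (f : MvPowerSeries (Fin n) S) : swapVars i j (swapVars i j f) = f := by
  ext m
  rw [swapVars_coeff, swapVars_coeff, equivMapDomain_swap_invol]

theorem eq_zero_of_X_sub_X_mul_eq_zero (hij : i ≠ j) {v : MvPowerSeries (Fin n) S}
    (hv : (X i - X j) * v = 0) : v = 0 := by
  have hXv : X i * v = X j * v := sub_eq_zero.mp (by rw [← sub_mul, hv])
  have hcoeff (m : Fin n →₀ ℕ) : coeff m v = coeff (m + single i 1) (X j * v) := by
    rw [← hXv, coeff_X_mul, if_pos le_add_self, add_tsub_cancel_right]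
  suffices ∀ N m, m j = N → coeff m v = 0 from ext fun m => this _ m rfl
  intro N
  induction N with
  | zero =>
    intro m hm
    rw [hcoeff, coeff_X_mul, if_neg]
    simp [single_le_iff, hij, hm]
  | succ N ih =>
    intro m hm
    rw [hcoeff, coeff_X_mul, if_pos (by simp [single_le_iff, hij, hm])]
    exact ih _ (by simp [hij, hm])

def transferExp (i j : Fin n) (m : Fin n →₀ ℕ) (k : ℕ) : Fin n →₀ ℕ :=
  m + k • single i 1 - k • single j 1

def lineCoeffSum (i j : Fin n) (h : MvPowerSeries (Fin n) S) (m : Fin n →₀ ℕ) : S :=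
  ∑ k ∈ Finset.range (m j + 1), coeff (transferExp i j m k) h

/-- The divided difference `(f - s f) / (x_i - x_j)`, obtained by expanding
`1 / (x_i - x_j) = ∑ₖ x_jᵏ / x_iᵏ⁺¹` coefficientwise. -/
def divDiff (i j : Fin n) (f : MvPowerSeries (Fin n) S) : MvPowerSeries (Fin n) S :=
  fun m => lineCoeffSum i j (f - swapVars i j f) (m + single i 1)

theorem transferExp_zero (m : Fin n →₀ ℕ) : transferExp i j m 0 = m := by
  simp [transferExp]

theorem transferExp_add_single_succ (m : Fin n →₀ ℕ) (k : ℕ) :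
    transferExp i j (m + single j 1) (k + 1) = transferExp i j (m + single i 1) k := by
  ext x
  simp only [transferExp, tsub_apply, Finsupp.add_apply, Finsupp.smul_apply, single_apply,
    smul_eq_mul]
  split_ifs <;> omega

theorem swap_transferExp (hij : i ≠ j) {m : Fin n →₀ ℕ} (hm : m i = 0) {k : ℕ} (hk : k ≤ m j) :
    equivMapDomain (Equiv.swap i j) (transferExp i j m k) = transferExp i j m (m j - k) := by
  ext x
  simp only [equivMapDomain_apply, Equiv.symm_swap, Equiv.swap_apply_def, transferExp, tsub_apply,
    Finsupp.add_apply, Finsupp.smul_apply, single_apply, smul_eq_mul]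
  split_ifs <;> subst_vars <;> omega

theorem lineCoeffSum_of_eq_zero (h : MvPowerSeries (Fin n) S) {m : Fin n →₀ ℕ} (hm : m j = 0) :
    lineCoeffSum i j h m = coeff m h := by
  simp [lineCoeffSum, hm, transferExp_zero]

theorem lineCoeffSum_add_single (hij : i ≠ j) (h : MvPowerSeries (Fin n) S) (m : Fin n →₀ ℕ) :
    lineCoeffSum i j h (m + single j 1) =
      lineCoeffSum i j h (m + single i 1) + coeff (m + single j 1) h := by
  simp [lineCoeffSum, hij.symm, Finset.sum_range_succ' _ (m j + 1), transferExp_zero,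
    transferExp_add_single_succ]

theorem lineCoeffSum_sub_swapVars (hij : i ≠ j) (f : MvPowerSeries (Fin n) S) {m : Fin n →₀ ℕ}
    (hm : m i = 0) : lineCoeffSum i j (f - swapVars i j f) m = 0 := by
  have hterm : ∀ k ∈ Finset.range (m j + 1), coeff (transferExp i j m k) (f - swapVars i j f) =
      coeff (transferExp i j m k) f - coeff (transferExp i j m (m j - k)) f := fun k hk => by
    rw [map_sub, swapVars_coeff,
      swap_transferExp hij hm (Nat.lt_succ_iff.mp (Finset.mem_range.mp hk))]
  rw [lineCoeffSum, Finset.sum_congr rfl hterm, Finset.sum_sub_distrib,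
    ← Finset.sum_range_reflect, sub_eq_zero]
  simp

theorem coeff_divDiff (f : MvPowerSeries (Fin n) S) (m : Fin n →₀ ℕ) :
    coeff m (divDiff i j f) = lineCoeffSum i j (f - swapVars i j f) (m + single i 1) := rfl

theorem coeff_X_mul_divDiff_left (hij : i ≠ j) (f : MvPowerSeries (Fin n) S) (m : Fin n →₀ ℕ) :
    coeff m (X i * divDiff i j f) = lineCoeffSum i j (f - swapVars i j f) m := by
  rw [coeff_X_mul]
  split_ifs with hm
  · rw [coeff_divDiff, tsub_add_cancel_of_le hm]
  · rw [lineCoeffSum_sub_swapVars hij f (by simpa [single_le_iff] using hm)]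

theorem coeff_X_mul_divDiff_right (hij : i ≠ j) (f : MvPowerSeries (Fin n) S) (m : Fin n →₀ ℕ) :
    coeff m (X j * divDiff i j f) =
      lineCoeffSum i j (f - swapVars i j f) m - coeff m (f - swapVars i j f) := by
  rw [coeff_X_mul]
  split_ifs with hm
  · obtain ⟨m, rfl⟩ : ∃ m', m = m' + single j 1 := ⟨_, (tsub_add_cancel_of_le hm).symm⟩
    rw [add_tsub_cancel_right, coeff_divDiff, lineCoeffSum_add_single hij, add_sub_cancel_right]
  · rw [lineCoeffSum_of_eq_zero _ (by simpa [single_le_iff] using hm), sub_self]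

theorem X_sub_X_mul_divDiff (hij : i ≠ j) (f : MvPowerSeries (Fin n) S) :
    (X i - X j) * divDiff i j f = f - swapVars i j f := by
  ext m
  rw [sub_mul, map_sub, coeff_X_mul_divDiff_left hij, coeff_X_mul_divDiff_right hij,
    sub_sub_cancel]

theorem mem_fixedSubalgebra {f : MvPowerSeries (Fin n) S} :
    f ∈ fixedSubalgebra S i j ↔ swapVars i j f = f := Iff.rfl

theorem divDiff_mem_fixedSubalgebra (hij : i ≠ j) (f : MvPowerSeries (Fin n) S) :
    divDiff i j f ∈ fixedSubalgebra S i j := by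
  have h := X_sub_X_mul_divDiff hij f
  have hs := congrArg (swapVars i j) h
  rw [swapVars_mul, swapVars_sub, swapVars_sub, swapVars_swapVars, swapVars_X, swapVars_X,
    Equiv.swap_apply_left, Equiv.swap_apply_right] at hs
  refine sub_eq_zero.mp (eq_zero_of_X_sub_X_mul_eq_zero hij ?_)
  linear_combination -hs - h

theorem exists_eq_add_mul_X (hij : i ≠ j) (f : MvPowerSeries (Fin n) S) :
    ∃ p ∈ fixedSubalgebra S i j, ∃ q ∈ fixedSubalgebra S i j, f = p + q * X i := by
  have hq := divDiff_mem_fixedSubalgebra hij f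
  refine ⟨f - divDiff i j f * X i, ?_, _, hq, by ring⟩
  rw [mem_fixedSubalgebra] at hq ⊢
  rw [swapVars_sub, swapVars_mul, hq, swapVars_X, Equiv.swap_apply_left]
  linear_combination X_sub_X_mul_divDiff hij f

end DividedDifference

open TensorProduct

theorem Subalgebra.tmul_mul_of_mem {R A : Type*} [CommSemiring R] [CommSemiring A] [Algebra R A]
    (B : Subalgebra R A) {p : A} (hp : p ∈ B) (r t : A) :
    r ⊗ₜ[B] (p * t) = (p * r) ⊗ₜ[B] t :=
  (TensorProduct.smul_tmul (⟨p, hp⟩ : B) r t).symm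

section BottSamelson

variable {n : ℕ} {i j : Fin n}

theorem mulHom_tmul (a b : MvPowerSeries (Fin n) S) :
    mulHom S i j (a ⊗ₜ b) = a * b := rfl

theorem mulsHom_tmul (a b : MvPowerSeries (Fin n) S) :
    mulsHom S i j (a ⊗ₜ b) = a * swapVars i j b := rfl

theorem exists_eq_tmul_one_add_tmul_X (hij : i ≠ j) (a : BSB S i j) :
    ∃ u v : MvPowerSeries (Fin n) S, a = u ⊗ₜ 1 + v ⊗ₜ X i := by
  induction a using TensorProduct.induction_on with
  | zero => exact ⟨0, 0, by simp⟩
  | tmul r t =>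
    obtain ⟨p, hp, q, hq, rfl⟩ := exists_eq_add_mul_X hij t
    refine ⟨p * r, q * r, ?_⟩
    rw [TensorProduct.tmul_add, ← Subalgebra.tmul_mul_of_mem _ hp, mul_one,
      Subalgebra.tmul_mul_of_mem _ hq]
  | add a b ha hb =>
    obtain ⟨u, v, rfl⟩ := ha
    obtain ⟨u', v', rfl⟩ := hb
    exact ⟨u + u', v + v', by simp only [TensorProduct.add_tmul]; abel⟩

theorem eq_of_mulHom_eq_of_mulsHom_eq (hij : i ≠ j) {a b : BSB S i j}
    (h : mulHom S i j a = mulHom S i j b) (hs : mulsHom S i j a = mulsHom S i j b) : a = b := by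
  obtain ⟨u, v, huv⟩ := exists_eq_tmul_one_add_tmul_X hij (a - b)
  have h₀ : u + v * X i = 0 := by
    rw [← sub_eq_zero, ← map_sub, huv, map_add, mulHom_tmul, mulHom_tmul, mul_one] at h
    exact h
  have hs₀ : u + v * X j = 0 := by
    rw [← sub_eq_zero, ← map_sub, huv, map_add, mulsHom_tmul, mulsHom_tmul, swapVars_one,
      swapVars_X, Equiv.swap_apply_left, mul_one] at hs
    exact hs
  have hv : v = 0 := eq_zero_of_X_sub_X_mul_eq_zero hij (by linear_combination h₀ - hs₀)
  have hu : u = 0 := by simpa [hv] using h₀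
  rw [← sub_eq_zero, huv, hu, hv, TensorProduct.zero_tmul, TensorProduct.zero_tmul, add_zero]

theorem mulHom_xiElt (g : MvPowerSeries (Fin 2) S) :
    mulHom S i j (xiElt g i j) = Ring.inverse (gsub g (X i) (X j)) * (X i - X j) := by
  simp only [xiElt, map_mul, map_sub, mulHom_tmul, mul_one, one_mul]

theorem mulsHom_xiElt (g : MvPowerSeries (Fin 2) S) : mulsHom S i j (xiElt g i j) = 0 := by
  simp only [xiElt, map_mul, map_sub, mulsHom_tmul, swapVars_one, swapVars_X,
    Equiv.swap_apply_left, mul_one, one_mul, sub_self, mul_zero]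

theorem mulHom_xiElt' (g : MvPowerSeries (Fin 2) S) : mulHom S i j (xiElt' g i j) = 0 := by
  simp only [xiElt', map_mul, map_sub, mulHom_tmul, mul_one, one_mul, sub_self, mul_zero]

theorem mulsHom_xiElt' (g : MvPowerSeries (Fin 2) S) :
    mulsHom S i j (xiElt' g i j) = Ring.inverse (gsub g (X j) (X i)) * (X j - X i) := by
  simp only [xiElt', map_mul, map_sub, mulsHom_tmul, swapVars_one, swapVars_X,
    Equiv.swap_apply_left, mul_one, one_mul]

end BottSamelson

theorem xi_xi'_characterization_general
    (F : MvPowerSeries (Fin 2) S)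
    (ι : MvPowerSeries (Fin 1) S)
    (g : MvPowerSeries (Fin 2) S)
    (hg : (X 0 : MvPowerSeries (Fin 2) S) - X 1 = fsub F ι (X 0) (X 1) * g)
    (hgu : IsUnit g)
    {n : ℕ} (i j : Fin n) (hij : (i : ℕ) + 1 = (j : ℕ)) :
    mulHom S i j (xiElt g i j) = fsub F ι (X i) (X j) ∧
    mulsHom S i j (xiElt g i j) = 0 ∧
    mulHom S i j (xiElt' g i j) = 0 ∧
    mulsHom S i j (xiElt' g i j) = fsub F ι (X j) (X i) ∧
    (∀ a : BSB S i j,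
        mulHom S i j a = fsub F ι (X i) (X j) → mulsHom S i j a = 0 → a = xiElt g i j) ∧
    (∀ a : BSB S i j,
        mulHom S i j a = 0 → mulsHom S i j a = fsub F ι (X j) (X i) → a = xiElt' g i j) := by
  have hne : i ≠ j := Fin.ne_of_val_ne (by omega)
  have hξ : mulHom S i j (xiElt g i j) = fsub F ι (X i) (X j) := by
    rw [mulHom_xiElt, inverse_gsub_mul_X_sub_X hg hgu]
  have hξ' : mulsHom S i j (xiElt' g i j) = fsub F ι (X j) (X i) := by
    rw [mulsHom_xiElt', inverse_gsub_mul_X_sub_X hg hgu]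
  refine ⟨hξ, mulsHom_xiElt g, mulHom_xiElt' g, hξ', fun a h hs => ?_, fun a h hs => ?_⟩
  · exact eq_of_mulHom_eq_of_mulsHom_eq hne (h.trans hξ.symm) (hs.trans (mulsHom_xiElt g).symm)
  · exact eq_of_mulHom_eq_of_mulsHom_eq hne (h.trans (mulHom_xiElt' g).symm) (hs.trans hξ'.symm)

/-- the elements `ξ, ξ' ∈ A = R ⊗_{R^{s_i}} R` satisfy
`μ(ξ) = x_i −_F x_{i+1}`, `μ_s(ξ) = 0`, `μ(ξ') = 0`, `μ_s(ξ') = x_{i+1} −_F x_i`,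
and each is uniquely determined by its pair of images. -/
theorem xi_xi'_characterization
    (F : MvPowerSeries (Fin 2) S) (hF : IsFormalGroupLaw F)
    (ι : MvPowerSeries (Fin 1) S) (hι : IsFormalInverse F ι)
    (g : MvPowerSeries (Fin 2) S)
    (hg : (X 0 : MvPowerSeries (Fin 2) S) - X 1 = fsub F ι (X 0) (X 1) * g)
    (hgu : IsUnit g)
    {n : ℕ} (i j : Fin n) (hij : (i : ℕ) + 1 = (j : ℕ)) :
    mulHom S i j (xiElt g i j) = fsub F ι (X i) (X j) ∧
    mulsHom S i j (xiElt g i j) = 0 ∧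
    mulHom S i j (xiElt' g i j) = 0 ∧
    mulsHom S i j (xiElt' g i j) = fsub F ι (X j) (X i) ∧
    (∀ a : BSB S i j,
        mulHom S i j a = fsub F ι (X i) (X j) → mulsHom S i j a = 0 → a = xiElt g i j) ∧
    (∀ a : BSB S i j,
        mulHom S i j a = 0 → mulsHom S i j a = fsub F ι (X j) (X i) → a = xiElt' g i j) :=
  xi_xi'_characterization_general F ι g hg hgu i j hij

end
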